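/- If additionally n and r are positive integers, s = r·p, and x = ⌈⌈n/p⌉/s⌉, then the maximum number of keys per output bucket of the deterministic regular oversampling algorithm satisfies n_max ≤ (1 + 1/r)·(n/p) + (r + 1)·p; that is, each of the cardinalities |{(k,q) : K k q < t_s}|, |{(k,q) : t_{j·s} < K k q < t_{(j+1)·s}}| for 1 ≤ j ≤ p−2, and |{(k,q) : K k q > t_{(p−1)·s}}| is at most (1 + 1/r)·(n/p) + (r + 1)·p (as a bound in the rationals). -/

import Mathlib

/-!
In one sorted sequence the keys lying in an order-convex set `I` occupy a contiguous block of
positions. Every segment meeting that block, except possibly the last one, ends inside it, so its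
sample lies in `I`; hence at most `x * (#samples in I + 1)` keys of the sequence lie in `I`, and
the `+ 1` disappears when `I` is an upper set. Summing over the `p` sequences, and using that at
most `s - 1` sorted samples lie strictly between two consecutive splitters, a bucket holds at most
`x * (s + p - 1)` keys. The two ceilings give `x * s * p < n + s * p`, which turns this into the
stated bound.
-/

private lemma idx_lt {a b : ℕ} (ha : 1 ≤ a) (hab : a ≤ b) : a - 1 < b := by omega

open Finset

section Segments

variable {s x : ℕ}

/-- Segment `j` occupies the positions `j * x, …, (j + 1) * x - 1`; its last key is sampled. -/
def segmentEnd (hx : 0 < x) (j : Fin s) : Fin (s * x) :=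
  ⟨((j : ℕ) + 1) * x - 1,
    idx_lt (Nat.mul_pos (Nat.succ_pos _) hx) (Nat.mul_le_mul j.isLt (le_refl x))⟩

def segmentOf (q : Fin (s * x)) : Fin s :=
  ⟨q / x, Nat.div_lt_of_lt_mul (by simp [mul_comm])⟩

lemma le_segmentEnd_segmentOf (hx : 0 < x) (q : Fin (s * x)) :
    q ≤ segmentEnd hx (segmentOf q) := by
  have := Nat.lt_div_mul_add (a := q) hx
  simp only [Fin.le_def, segmentEnd, segmentOf, add_mul, one_mul]
  omega

lemma segmentEnd_lt_of_lt_segmentOf (hx : 0 < x) {j : Fin s} {q : Fin (s * x)}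
    (hj : j < segmentOf q) : segmentEnd hx j < q := by
  have : ((j : ℕ) + 1) * x ≤ q := (Nat.le_div_iff_mul_le hx).1 hj
  exact Fin.lt_def.2 ((Nat.sub_lt (Nat.mul_pos j.val.succ_pos hx) one_pos).trans_le this)

lemma card_segmentOf_fiber_le (hx : 0 < x) (Q : Finset (Fin (s * x))) (j : Fin s) :
    #{q ∈ Q | segmentOf q = j} ≤ x := by
  calc #{q ∈ Q | segmentOf q = j}
      ≤ #(range x) := by
        refine card_le_card_of_injOn (fun q => (q : ℕ) % x)
          (fun q _ => mem_range.2 (Nat.mod_lt _ hx)) fun q hq q' hq' hmod => ?_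
        have hdiv : (q : ℕ) / x = (q' : ℕ) / x := by
          simp only [coe_filter, Set.mem_ofPred_eq] at hq hq'
          rw [← Fin.val_eq_val] at hq hq'
          exact hq.2.trans hq'.2.symm
        dsimp only at hmod
        exact Fin.ext (by rw [← Nat.div_add_mod q x, ← Nat.div_add_mod q' x, hdiv, hmod])
    _ = x := card_range x

end Segments

section SortedSequence

variable {α : Type*} [LinearOrder α] {s x : ℕ} {f : Fin (s * x) → α}
  (P : α → Prop) [DecidablePred P]

lemma card_le_mul_card_image_segmentOf (hx : 0 < x) (Q : Finset (Fin (s * x))) :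
    #Q ≤ x * #(Q.image segmentOf) :=
  card_le_mul_card_image _ _ fun j _ => card_segmentOf_fiber_le hx Q j

lemma Monotone.card_filter_le_of_isUpperSet (hx : 0 < x) (hf : Monotone f)
    (hP : IsUpperSet {a | P a}) :
    #{q | P (f q)} ≤ x * #{j | P (f (segmentEnd hx j))} := by
  refine (card_le_mul_card_image_segmentOf hx _).trans (Nat.mul_le_mul_left x (card_le_card ?_))
  intro j hj
  obtain ⟨q, hq, rfl⟩ := mem_image.1 hj
  simp only [mem_filter, mem_univ, true_and] at hq ⊢
  exact hP (hf (le_segmentEnd_segmentOf hx q)) hq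

lemma Monotone.card_filter_le_of_ordConnected (hx : 0 < x) (hf : Monotone f)
    (hP : Set.OrdConnected {a | P a}) :
    #{q | P (f q)} ≤ x * (#{j | P (f (segmentEnd hx j))} + 1) := by
  set J := (univ.filter fun q => P (f q)).image segmentOf
  refine (card_le_mul_card_image_segmentOf hx _).trans (Nat.mul_le_mul_left x ?_)
  change #J ≤ _
  rcases J.eq_empty_or_nonempty with hJ | hJ
  · simp [J, hJ]
  have hsub : J.erase (J.max' hJ) ⊆ univ.filter fun j => P (f (segmentEnd hx j)) := by
    intro j hj
    obtain ⟨hjm, hjJ⟩ := mem_erase.1 hj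
    obtain ⟨q, hq, rfl⟩ := mem_image.1 hjJ
    obtain ⟨q', hq', hq'm⟩ := mem_image.1 (J.max'_mem hJ)
    have hlt : segmentOf q < segmentOf q' := hq'm ▸ lt_of_le_of_ne (J.le_max' _ hjJ) hjm
    simp only [mem_filter, mem_univ, true_and] at hq hq' ⊢
    exact hP.out hq hq'
      ⟨hf (le_segmentEnd_segmentOf hx q), hf (segmentEnd_lt_of_lt_segmentOf hx hlt).le⟩
  have := card_le_card hsub
  have := pred_card_le_card_erase (s := J) (a := J.max' hJ)
  omega

end SortedSequence

lemma card_filter_prod_eq_sum {β γ : Type*} [Fintype β] [Fintype γ]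
    (P : β → γ → Prop) [∀ b c, Decidable (P b c)] :
    #{bc : β × γ | P bc.1 bc.2} = ∑ b, #{c | P b c} := by
  simp only [card_filter]
  rw [← univ_product_univ, sum_product]

lemma card_filter_comp_eq_of_coe_ofFn_eq_map {α ι : Type*} [Fintype ι] {N : ℕ} {g : ι → α}
    {t : Fin N → α} (h : (List.ofFn t : Multiset α) = Multiset.map g univ.val)
    (P : α → Prop) [DecidablePred P] :
    #{i | P (g i)} = #{i | P (t i)} := by
  have ht : (List.ofFn t : Multiset α) = Multiset.map t univ.val := by
    rw [List.ofFn_eq_map]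
    rfl
  rw [card_def, card_def, filter_val, filter_val, ← Multiset.countP_map, ← Multiset.countP_map,
    ← h, ht]

section Buckets

variable {α : Type*} [LinearOrder α] {p s x : ℕ} (hx : 0 < x) {K : Fin p → Fin (s * x) → α}
  {t : Fin (p * s) → α}
  (P : α → Prop) [DecidablePred P]

lemma card_filter_le_of_isUpperSet_of_sample (hK : ∀ k, Monotone (K k))
    (hsample : (List.ofFn t : Multiset α) =
      Multiset.map (fun kj : Fin p × Fin s => K kj.1 (segmentEnd hx kj.2)) univ.val)
    (hP : IsUpperSet {a | P a}) :
    #{kq : Fin p × Fin (s * x) | P (K kq.1 kq.2)} ≤ x * #{i | P (t i)} := by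
  rw [← card_filter_comp_eq_of_coe_ofFn_eq_map hsample,
    card_filter_prod_eq_sum (fun k q => P (K k q)),
    card_filter_prod_eq_sum (fun k j => P (K k (segmentEnd hx j))), mul_sum]
  exact sum_le_sum fun k _ => (hK k).card_filter_le_of_isUpperSet P hx hP

lemma card_filter_le_of_ordConnected_of_sample (hK : ∀ k, Monotone (K k))
    (hsample : (List.ofFn t : Multiset α) =
      Multiset.map (fun kj : Fin p × Fin s => K kj.1 (segmentEnd hx kj.2)) univ.val)
    (hP : Set.OrdConnected {a | P a}) :
    #{kq : Fin p × Fin (s * x) | P (K kq.1 kq.2)} ≤ x * (#{i | P (t i)} + p) := by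
  rw [← card_filter_comp_eq_of_coe_ofFn_eq_map hsample,
    card_filter_prod_eq_sum (fun k q => P (K k q)),
    card_filter_prod_eq_sum (fun k j => P (K k (segmentEnd hx j)))]
  calc ∑ k, #{q | P (K k q)}
      ≤ ∑ k, x * (#{j | P (K k (segmentEnd hx j))} + 1) :=
        sum_le_sum fun k _ => (hK k).card_filter_le_of_ordConnected P hx hP
    _ = x * (∑ k, #{j | P (K k (segmentEnd hx j))} + p) := by
        simp [mul_sum, sum_add_distrib, mul_add, mul_comm]

end Buckets

section SortedSample

variable {α : Type*} [LinearOrder α] {N : ℕ} {t : Fin N → α}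

lemma Monotone.card_filter_lt_le (ht : Monotone t) (b : Fin N) :
    #{i | t i < t b} ≤ b :=
  (card_le_card fun _ hi => mem_Iio.2 (ht.reflect_lt (mem_filter.1 hi).2)).trans
    (Fin.card_Iio b).le

lemma Monotone.card_filter_gt_le (ht : Monotone t) (a : Fin N) :
    #{i | t a < t i} ≤ N - 1 - a :=
  (card_le_card fun _ hi => mem_Ioi.2 (ht.reflect_lt (mem_filter.1 hi).2)).trans
    (Fin.card_Ioi a).le

lemma Monotone.card_filter_mem_Ioo_le (ht : Monotone t) (a b : Fin N) :
    #{i | t a < t i ∧ t i < t b} ≤ b - a - 1 := by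
  refine (card_le_card fun i hi => ?_).trans (Fin.card_Ioo a b).le
  obtain ⟨hai, hib⟩ := (mem_filter.1 hi).2
  exact mem_Ioo.2 ⟨ht.reflect_lt hai, ht.reflect_lt hib⟩

end SortedSample

lemma mul_mul_lt_of_eq_ceil_div_ceil_div {n p s x : ℕ} (hp : 0 < p) (hs : 0 < s)
    (hx : (x : ℤ) = ⌈((⌈(n : ℚ) / p⌉ : ℤ) : ℚ) / s⌉) :
    x * s * p < n + s * p := by
  set A := ⌈(n : ℚ) / p⌉
  have hxA : ((x : ℤ) - 1) * s < A := by
    have : (x : ℤ) - 1 < ⌈(A : ℚ) / s⌉ := by omega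
    rw [Int.lt_ceil, lt_div_iff₀ (by exact_mod_cast hs)] at this
    exact_mod_cast this
  have hAn : (A - 1) * p < n := by
    have : A - 1 < A := by omega
    rw [Int.lt_ceil, lt_div_iff₀ (by exact_mod_cast hp)] at this
    exact_mod_cast this
  have : (x : ℤ) * s * p < n + s * p := by nlinarith
  exact_mod_cast this

lemma cast_mul_le_of_mul_mul_lt {n p r s x : ℕ} (hp : 0 < p) (hr : 0 < r) (hsr : s = r * p)
    (h : x * s * p < n + s * p) :
    ((x * (s + p - 1) : ℕ) : ℚ) ≤
      (1 + 1 / (r : ℚ)) * ((n : ℚ) / p) + ((r : ℚ) + 1) * p := by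
  subst hsr
  have hp' : (0 : ℚ) < p := by exact_mod_cast hp
  have hr' : (0 : ℚ) < r := by exact_mod_cast hr
  have h' : (x : ℚ) * (r * p) * p ≤ n + r * p * p := by exact_mod_cast h.le
  have hsub : ((x * (r * p + p - 1) : ℕ) : ℚ) ≤ x * (r * p + p) := by
    exact_mod_cast Nat.mul_le_mul_left x (Nat.sub_le _ 1)
  refine hsub.trans ?_
  have hrhs : (1 + 1 / (r : ℚ)) * ((n : ℚ) / p) + ((r : ℚ) + 1) * p
      = (r + 1) * (n + r * p * p) / (r * p) := by
    field_simp
  rw [hrhs, le_div_iff₀ (by positivity)]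
  nlinarith

/-- **Statement 3.** In the regular oversampling setup with `p ≥ 2`, `s = r * p`
and segment length `x = ⌈⌈n/p⌉/s⌉`, each of the `p` buckets induced by the
`p - 1` splitters contains at most `(1 + 1/r) * (n/p) + (r + 1) * p` keys. -/
theorem stmt_4
    (p s x n r : ℕ) (hp : 2 ≤ p) (hs : 0 < s) (hx : 0 < x)
    (hr : 0 < r)
    (hsr : s = r * p)
    (hxdef : (x : ℤ) = ⌈((⌈(n : ℚ) / (p : ℚ)⌉ : ℤ) : ℚ) / (s : ℚ)⌉)
    (α : Type*) [LinearOrder α]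
    (K : Fin p → Fin (s * x) → α)
    (hK : ∀ k : Fin p, Monotone (K k))
    (t : Fin (p * s) → α)
    (ht : Monotone t)
    (hsample :
      (↑(List.ofFn t) : Multiset α) =
        Multiset.map
          (fun kj : Fin p × Fin s =>
            K kj.1
              ⟨((kj.2 : ℕ) + 1) * x - 1,
                idx_lt (Nat.mul_pos (Nat.succ_pos _) hx)
                  (Nat.mul_le_mul kj.2.isLt (le_refl x))⟩)
          Finset.univ.val) :
    ((Finset.univ.filter
        (fun kq : Fin p × Fin (s * x) =>
          K kq.1 kq.2 <
            t ⟨s - 1,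
              idx_lt hs (le_mul_of_one_le_left (Nat.zero_le s) (by omega))⟩)).card : ℚ) ≤
        (1 + 1 / (r : ℚ)) * ((n : ℚ) / (p : ℚ)) + ((r : ℚ) + 1) * (p : ℚ) ∧
    (∀ j : ℕ, ∀ (hj1 : 1 ≤ j) (hj2 : j ≤ p - 2),
      ((Finset.univ.filter
          (fun kq : Fin p × Fin (s * x) =>
            t ⟨j * s - 1,
                idx_lt (Nat.mul_pos hj1 hs)
                  (Nat.mul_le_mul (by omega) (le_refl s))⟩ <
              K kq.1 kq.2 ∧
            K kq.1 kq.2 <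
              t ⟨(j + 1) * s - 1,
                idx_lt (Nat.mul_pos (Nat.succ_pos j) hs)
                  (Nat.mul_le_mul (by omega) (le_refl s))⟩)).card : ℚ) ≤
        (1 + 1 / (r : ℚ)) * ((n : ℚ) / (p : ℚ)) + ((r : ℚ) + 1) * (p : ℚ)) ∧
    ((Finset.univ.filter
        (fun kq : Fin p × Fin (s * x) =>
          t ⟨(p - 1) * s - 1,
              idx_lt (Nat.mul_pos (by omega) hs)
                (Nat.mul_le_mul (Nat.sub_le p 1) (le_refl s))⟩ <
            K kq.1 kq.2)).card : ℚ) ≤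
      (1 + 1 / (r : ℚ)) * ((n : ℚ) / (p : ℚ)) + ((r : ℚ) + 1) * (p : ℚ) := by
  have hbound {c : ℕ} (hc : c ≤ x * (s + p - 1)) :
      (c : ℚ) ≤ (1 + 1 / (r : ℚ)) * ((n : ℚ) / p) + ((r : ℚ) + 1) * p :=
    (Nat.cast_le.2 hc).trans <| cast_mul_le_of_mul_mul_lt (by omega) hr hsr <|
      mul_mul_lt_of_eq_ceil_div_ceil_div (by omega) hs hxdef
  refine ⟨hbound ?_, fun j hj1 hj2 => hbound ?_, hbound ?_⟩
  · refine le_trans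
      (card_filter_le_of_ordConnected_of_sample hx (· < t _) hK hsample Set.ordConnected_Iio) ?_
    refine Nat.mul_le_mul_left x ((Nat.add_le_add_right (ht.card_filter_lt_le _) p).trans ?_)
    dsimp only
    omega
  · refine le_trans (card_filter_le_of_ordConnected_of_sample hx (fun a => t _ < a ∧ a < t _)
      hK hsample Set.ordConnected_Ioo) ?_
    refine Nat.mul_le_mul_left x ((Nat.add_le_add_right (ht.card_filter_mem_Ioo_le _ _) p).trans ?_)
    have : 1 ≤ j * s := Nat.mul_pos hj1 hs
    dsimp only
    rw [add_one_mul]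
    omega
  · refine le_trans
      (card_filter_le_of_isUpperSet_of_sample hx (t _ < ·) hK hsample (isUpperSet_Ioi _)) ?_
    refine Nat.mul_le_mul_left x ((ht.card_filter_gt_le _).trans ?_)
    have : 1 ≤ (p - 1) * s := Nat.mul_pos (by omega) hs
    have : p * s = (p - 1) * s + s := by rw [← add_one_mul, Nat.sub_add_cancel (by omega)]
    dsimp only
    omega
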